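/- arXiv:1602.06382 — 5 statements merged into one kernel-verified Lean document; each statement's English description precedes it below -/
import Mathlib

section
/- Let μ ∈ (0,1/2), η, X, Y, ω > 0 and define a₄ = 1-2μ, a₃ = (X + (1-2μ)η)ω, a₂ = (ηX + Y + 1)ω², a₁ = (ηY + X + 2μη)ω³, a₀ = Yω⁴. Then a₀/a₁ ≤ a₂/a₃ and a₁/a₂ ≤ a₃/a₄. -/
theorem stmt_8 (μ η X Y ω : ℝ) (hμ : μ ∈ Set.Ioo (0:ℝ) (1/2))
    (hη : 0 < η) (hX : 0 < X) (hY : 0 < Y) (hω : 0 < ω)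
    (a₀ a₁ a₂ a₃ a₄ : ℝ)
    (h4 : a₄ = 1 - 2*μ) (h3 : a₃ = (X + (1 - 2*μ)*η)*ω)
    (h2 : a₂ = (η*X + Y + 1)*ω^2) (h1 : a₁ = (η*Y + X + 2*μ*η)*ω^3)
    (h0 : a₀ = Y*ω^4) :
    a₀/a₁ ≤ a₂/a₃ ∧ a₁/a₂ ≤ a₃/a₄ := by
  obtain ⟨hμ0, hμ2⟩ := hμ
  have hm : 0 < 1 - 2*μ := by linarith
  subst h0 h1 h2 h3 h4
  constructor
  · rw [div_le_div_iff₀ (by positivity) (by positivity)]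
    have key : Y*(X + (1 - 2*μ)*η) ≤ (η*X + Y + 1)*(η*Y + X + 2*μ*η) := by
      nlinarith [mul_pos (mul_pos hη hη) (mul_pos hX hY), mul_pos hη (mul_pos hX hX),
        mul_pos (mul_pos hμ0 (mul_pos hη hη)) hX, mul_pos hη (mul_pos hY hY),
        mul_pos (mul_pos hμ0 hη) hY, mul_pos hμ0 hη]
    have := mul_le_mul_of_nonneg_right key (pow_pos hω 5).le
    nlinarith [this]
  · rw [div_le_div_iff₀ (by positivity) hm]
    nlinarith [mul_pos hη (mul_pos hX hX), mul_pos hX hY, mul_pos hμ0 hX,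
      mul_pos (mul_pos hm (mul_pos hη hη)) hX, mul_pos (mul_pos hm hm) hη,
      pow_pos hω 3]
end

section
/- (Eneström–Kakeya) Let p(λ) = a₀ + a₁λ + ⋯ + aₙλⁿ be a polynomial with all aⱼ > 0. Then every complex zero z of p satisfies ρ_m ≤ |z| ≤ ρ_M, where ρ_m = min{a₀/a₁, a₁/a₂, …, a_{n-1}/aₙ} and ρ_M = max{a₀/a₁, …, a_{n-1}/aₙ}. -/
/-!
Multiplying by `z - 1` telescopes `∑ bⱼ zʲ` into `bₙ zⁿ⁺¹ - b₀ - ∑ (bⱼ₊₁ - bⱼ) zʲ⁺¹`. When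
`0 ≤ b₀ ≤ b₁ ≤ ⋯ ≤ bₙ` and `|z| > 1`, the subtracted terms have norm at most
`(b₀ + ∑ (bⱼ₊₁ - bⱼ)) |z|ⁿ = bₙ |z|ⁿ < bₙ |z|ⁿ⁺¹`, so `z` is not a zero. Substituting `z = R w`
turns `aⱼ ≤ R aⱼ₊₁` into monotone coefficients, giving `|z| ≤ ρ_M`; reversing the coefficients
(zeros `z ↦ z⁻¹`) gives `ρ_m ≤ |z|`.
-/

open Finset

theorem sub_one_mul_sum_range_mul_pow {R : Type*} [CommRing R] (b : ℕ → R) (z : R) (n : ℕ) :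
    (z - 1) * ∑ j ∈ range (n + 1), b j * z ^ j
      = b n * z ^ (n + 1) - b 0 - ∑ j ∈ range n, (b (j + 1) - b j) * z ^ (j + 1) := by
  induction n with
  | zero => simp; ring
  | succ n ih =>
    rw [sum_range_succ (fun j => b j * z ^ j),
      sum_range_succ (fun j => (b (j + 1) - b j) * z ^ (j + 1)), mul_add, ih]
    ring

theorem pow_mul_sum_range_reflect_mul_inv_pow {K : Type*} [Field K] (a : ℕ → K) {z : K}
    (hz : z ≠ 0) (n : ℕ) :
    z ^ n * ∑ j ∈ range (n + 1), a (n - j) * z⁻¹ ^ j = ∑ j ∈ range (n + 1), a j * z ^ j := by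
  rw [mul_sum, ← sum_range_reflect (fun j => a j * z ^ j)]
  refine sum_congr rfl fun j hj => ?_
  have hjn : j ≤ n := Nat.lt_succ_iff.mp (mem_range.mp hj)
  rw [Nat.add_sub_cancel, pow_sub₀ z hz hjn, inv_pow]
  ring

theorem sum_range_sub_mul_pow_le {b : ℕ → ℝ} {n : ℕ} (hb : ∀ j < n, b j ≤ b (j + 1))
    (hb₀ : 0 ≤ b 0) {r : ℝ} (hr : 1 ≤ r) :
    b 0 + ∑ j ∈ range n, (b (j + 1) - b j) * r ^ (j + 1) ≤ b n * r ^ n :=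
  calc b 0 + ∑ j ∈ range n, (b (j + 1) - b j) * r ^ (j + 1)
      ≤ b 0 * r ^ n + ∑ j ∈ range n, (b (j + 1) - b j) * r ^ n := by
        gcongr with j hj
        · exact le_mul_of_one_le_right hb₀ (one_le_pow₀ hr)
        · exact sub_nonneg.mpr (hb j (mem_range.mp hj))
        · exact mem_range.mp hj
    _ = b n * r ^ n := by rw [← sum_mul, sum_range_sub b]; ring

theorem norm_le_one_of_coeff_monotone {b : ℕ → ℝ} {n : ℕ} (hb : ∀ j < n, b j ≤ b (j + 1))
    (hb₀ : 0 ≤ b 0) (hbn : 0 < b n) {z : ℂ}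
    (hz : ∑ j ∈ range (n + 1), (b j : ℂ) * z ^ j = 0) : ‖z‖ ≤ 1 := by
  by_contra! hz1
  have hlead : (b n : ℂ) * z ^ (n + 1)
      = b 0 + ∑ j ∈ range n, ((b (j + 1) : ℂ) - b j) * z ^ (j + 1) := by
    linear_combination (z - 1) * hz - sub_one_mul_sum_range_mul_pow (fun j => (b j : ℂ)) z n
  have hnorm : b n * ‖z‖ ^ (n + 1) ≤ b n * ‖z‖ ^ n :=
    calc b n * ‖z‖ ^ (n + 1) = ‖(b n : ℂ) * z ^ (n + 1)‖ := by
          rw [norm_mul, norm_pow, Complex.norm_of_nonneg hbn.le]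
      _ ≤ ‖(b 0 : ℂ)‖ + ∑ j ∈ range n, ‖((b (j + 1) : ℂ) - b j) * z ^ (j + 1)‖ := by
          rw [hlead]
          exact (norm_add_le _ _).trans (add_le_add_right (norm_sum_le _ _) _)
      _ = b 0 + ∑ j ∈ range n, (b (j + 1) - b j) * ‖z‖ ^ (j + 1) := by
          rw [Complex.norm_of_nonneg hb₀]
          congr 1
          refine sum_congr rfl fun j hj => ?_
          rw [norm_mul, norm_pow, ← Complex.ofReal_sub,
            Complex.norm_of_nonneg (sub_nonneg.mpr (hb j (mem_range.mp hj)))]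
      _ ≤ b n * ‖z‖ ^ n := sum_range_sub_mul_pow_le hb hb₀ hz1.le
  exact (pow_lt_pow_right₀ hz1 n.lt_succ_self).not_ge (le_of_mul_le_mul_left hnorm hbn)

theorem norm_le_of_coeff_le_mul {a : ℕ → ℝ} {n : ℕ} {R : ℝ} (hR : 0 < R)
    (ha : ∀ j < n, a j ≤ a (j + 1) * R) (ha₀ : 0 ≤ a 0) (han : 0 < a n) {z : ℂ}
    (hz : ∑ j ∈ range (n + 1), (a j : ℂ) * z ^ j = 0) : ‖z‖ ≤ R := by
  have hR' : (R : ℂ) ≠ 0 := by exact_mod_cast hR.ne'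
  have hscaled : ∑ j ∈ range (n + 1), ((a j * R ^ j : ℝ) : ℂ) * (z / R) ^ j = 0 := by
    rw [← hz]
    refine sum_congr rfl fun j _ => ?_
    push_cast
    rw [div_pow, mul_assoc, mul_div_cancel₀ _ (pow_ne_zero j hR')]
  have hmono : ∀ j < n, a j * R ^ j ≤ a (j + 1) * R ^ (j + 1) := fun j hj =>
    calc a j * R ^ j ≤ a (j + 1) * R * R ^ j := by gcongr; exact ha j hj
      _ = a (j + 1) * R ^ (j + 1) := by ring
  have := norm_le_one_of_coeff_monotone hmono (by simpa using ha₀) (by positivity) hscaled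
  rwa [norm_div, Complex.norm_of_nonneg hR.le, div_le_one hR] at this

theorem le_norm_of_mul_le_coeff {a : ℕ → ℝ} {n : ℕ} {r : ℝ} (hr : 0 < r)
    (ha : ∀ j < n, r * a (j + 1) ≤ a j) (ha₀ : 0 < a 0) (han : 0 ≤ a n) {z : ℂ}
    (hz : ∑ j ∈ range (n + 1), (a j : ℂ) * z ^ j = 0) : r ≤ ‖z‖ := by
  have hz₀ : z ≠ 0 := by
    rintro rfl
    simp [sum_range_succ', ha₀.ne'] at hz
  have hrev : ∑ j ∈ range (n + 1), (a (n - j) : ℂ) * z⁻¹ ^ j = 0 := by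
    have := pow_mul_sum_range_reflect_mul_inv_pow (fun j => (a j : ℂ)) hz₀ n
    rw [hz] at this
    exact (mul_eq_zero.mp this).resolve_left (pow_ne_zero n hz₀)
  have hratio : ∀ j < n, a (n - j) ≤ a (n - (j + 1)) * r⁻¹ := by
    intro j hj
    have h := ha (n - (j + 1)) (by omega)
    rw [show n - (j + 1) + 1 = n - j by omega] at h
    rw [le_mul_inv_iff₀ hr, mul_comm]
    exact h
  have := norm_le_of_coeff_le_mul (inv_pos.mpr hr) hratio han (by simpa using ha₀) hrev
  rwa [norm_inv, inv_le_inv₀ (norm_pos_iff.mpr hz₀) hr] at this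

theorem stmt_9 (n : ℕ) (hn : 1 ≤ n) (a : ℕ → ℝ) (ha : ∀ j ≤ n, 0 < a j)
    (z : ℂ) (hz : ∑ j ∈ Finset.range (n+1), (a j : ℂ) * z ^ j = 0) :
    (((Finset.range n).image (fun j => a j / a (j+1))).min'
        (Finset.image_nonempty.mpr (Finset.nonempty_range_iff.mpr (by omega))) ≤ ‖z‖)
    ∧ (‖z‖ ≤ ((Finset.range n).image (fun j => a j / a (j+1))).max'
        (Finset.image_nonempty.mpr (Finset.nonempty_range_iff.mpr (by omega)))) := by
  set ratios := (range n).image (fun j => a j / a (j + 1))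
  have hne : ratios.Nonempty := image_nonempty.mpr (nonempty_range_iff.mpr (by omega))
  have hratio_mem : ∀ j < n, a j / a (j + 1) ∈ ratios := fun j hj =>
    mem_image_of_mem _ (mem_range.mpr hj)
  have hratio_pos : ∀ x ∈ ratios, 0 < x := by
    simp only [ratios, mem_image, mem_range]
    rintro _ ⟨j, hj, rfl⟩
    exact div_pos (ha j hj.le) (ha (j + 1) hj)
  constructor
  · refine le_norm_of_mul_le_coeff (hratio_pos _ (ratios.min'_mem hne)) (fun j hj => ?_)
      (ha 0 (Nat.zero_le n)) (ha n le_rfl).le hz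
    rw [← le_div_iff₀ (ha (j + 1) hj)]
    exact ratios.min'_le _ (hratio_mem j hj)
  · refine norm_le_of_coeff_le_mul (hratio_pos _ (ratios.max'_mem hne)) (fun j hj => ?_)
      (ha 0 (Nat.zero_le n)).le (ha n le_rfl) hz
    rw [← div_le_iff₀' (ha (j + 1) hj)]
    exact ratios.le_max' _ (hratio_mem j hj)
end

section
/- Let μ ∈ (0,1/2), η, X, Y, ω > 0. All roots of the quartic (1-2μ)λ⁴ + [X+(1-2μ)η]ωλ³ + (ηX+Y+1)ω²λ² + (ηY+X+2μη)ω³λ + Yω⁴ = 0 have strictly negative real part. -/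
set_option maxHeartbeats 4000000 in
theorem stmt_11 (μ η X Y ω : ℝ) (hμ : μ ∈ Set.Ioo (0:ℝ) (1/2))
    (hη : 0 < η) (hX : 0 < X) (hY : 0 < Y) (hω : 0 < ω)
    (z : ℂ)
    (hz : ((1 - 2*μ : ℝ) : ℂ) * z^4 + (((X + (1 - 2*μ)*η)*ω : ℝ) : ℂ) * z^3 +
          (((η*X + Y + 1)*ω^2 : ℝ) : ℂ) * z^2 + (((η*Y + X + 2*μ*η)*ω^3 : ℝ) : ℂ) * z +
          ((Y*ω^4 : ℝ) : ℂ) = 0) :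
    z.re < 0 := by
  obtain ⟨hμ0, hμ2⟩ := hμ
  have hs : (0:ℝ) < 1 - 2*μ := by linarith
  by_contra hcon
  push_neg at hcon
  have hA : (0:ℝ) ≤ z.re := hcon
  have h1 := congrArg Complex.re hz
  have h2 := congrArg Complex.im hz
  simp only [Complex.add_re, Complex.add_im, Complex.mul_re, Complex.mul_im, Complex.ofReal_re,
    Complex.ofReal_im, Complex.zero_re, Complex.zero_im, pow_succ, pow_zero, Complex.one_re,
    Complex.one_im, one_mul, zero_mul, mul_zero, zero_sub, sub_zero, zero_add, mul_one] at h1 h2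
  have hre : (1-2*μ)*(z.re^4 - 6*z.re^2*z.im^2 + z.im^4) + ((X+(1-2*μ)*η)*ω)*(z.re^3 - 3*z.re*z.im^2) + ((η*X+Y+1)*ω^2)*(z.re^2 - z.im^2) + ((η*Y+X+2*μ*η)*ω^3)*z.re + (Y*ω^4) = 0 := by linear_combination h1
  rcases eq_or_ne z.im 0 with hb | hb
  · rw [hb] at hre
    have u1 : (0:ℝ) ≤ (1-2*μ)*z.re^4 := mul_nonneg hs.le (pow_nonneg hA 4)
    have u2 : (0:ℝ) ≤ ((X+(1-2*μ)*η)*ω)*z.re^3 :=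
      mul_nonneg (mul_nonneg (by linarith [mul_nonneg hs.le hη.le] : (0:ℝ) ≤ X+(1-2*μ)*η) hω.le) (pow_nonneg hA 3)
    have u3 : (0:ℝ) ≤ ((η*X+Y+1)*ω^2)*z.re^2 := by positivity
    have u4 : (0:ℝ) ≤ ((η*Y+X+2*μ*η)*ω^3)*z.re :=
      mul_nonneg (mul_nonneg (by linarith [mul_nonneg hμ0.le hη.le, mul_nonneg hη.le hY.le] : (0:ℝ) ≤ η*Y+X+2*μ*η) (pow_nonneg hω.le 3)) hA
    have u5 : (0:ℝ) < Y*ω^4 := by positivity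
    linarith [hre, u1, u2, u3, u4, u5]
  · have him : (1-2*μ)*(4*z.re^3*z.im - 4*z.re*z.im^3) + ((X+(1-2*μ)*η)*ω)*(3*z.re^2*z.im - z.im^3) + ((η*X+Y+1)*ω^2)*(2*z.re*z.im) + ((η*Y+X+2*μ*η)*ω^3)*z.im = 0 := by linear_combination h2
    have hbM : z.im * ((4*(1-2*μ)*z.re^3 + 3*((X+(1-2*μ)*η)*ω)*z.re^2 + 2*((η*X+Y+1)*ω^2)*z.re + ((η*Y+X+2*μ*η)*ω^3)) - z.im^2*(4*(1-2*μ)*z.re + ((X+(1-2*μ)*η)*ω))) = 0 := by linear_combination him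
    have hM : (4*(1-2*μ)*z.re^3 + 3*((X+(1-2*μ)*η)*ω)*z.re^2 + 2*((η*X+Y+1)*ω^2)*z.re + ((η*Y+X+2*μ*η)*ω^3)) - z.im^2*(4*(1-2*μ)*z.re + ((X+(1-2*μ)*η)*ω)) = 0 := by
      rcases mul_eq_zero.mp hbM with h | h
      · exact absurd h hb
      · exact h
    have hP : (1-2*μ)*(4*(1-2*μ)*z.re^3 + 3*((X+(1-2*μ)*η)*ω)*z.re^2 + 2*((η*X+Y+1)*ω^2)*z.re + ((η*Y+X+2*μ*η)*ω^3))^2 - (6*(1-2*μ)*z.re^2 + 3*((X+(1-2*μ)*η)*ω)*z.re + ((η*X+Y+1)*ω^2))*(4*(1-2*μ)*z.re^3 + 3*((X+(1-2*μ)*η)*ω)*z.re^2 + 2*((η*X+Y+1)*ω^2)*z.re + ((η*Y+X+2*μ*η)*ω^3))*(4*(1-2*μ)*z.re + ((X+(1-2*μ)*η)*ω)) + ((1-2*μ)*z.re^4 + ((X+(1-2*μ)*η)*ω)*z.re^3 + ((η*X+Y+1)*ω^2)*z.re^2 + ((η*Y+X+2*μ*η)*ω^3)*z.re + (Y*ω^4))*(4*(1-2*μ)*z.re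 + ((X+(1-2*μ)*η)*ω))^2 = 0 := by
      linear_combination ((4*(1-2*μ)*z.re + ((X+(1-2*μ)*η)*ω))^2)*hre + ((1-2*μ)*((4*(1-2*μ)*z.re^3 + 3*((X+(1-2*μ)*η)*ω)*z.re^2 + 2*((η*X+Y+1)*ω^2)*z.re + ((η*Y+X+2*μ*η)*ω^3))+z.im^2*(4*(1-2*μ)*z.re + ((X+(1-2*μ)*η)*ω))) - (6*(1-2*μ)*z.re^2 + 3*((X+(1-2*μ)*η)*ω)*z.re + ((η*X+Y+1)*ω^2))*(4*(1-2*μ)*z.re + ((X+(1-2*μ)*η)*ω)))*hM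
    have hq1 : (0:ℝ) ≤ (1-Y)^2+8*μ*Y := by linarith [sq_nonneg (1-Y), mul_nonneg hμ0.le hY.le]
    have hq2 : (0:ℝ) ≤ (1-Y-4*μ)^2+4*μ*(1-2*μ) := by
      linarith [sq_nonneg (1-Y-4*μ), mul_nonneg hμ0.le hs.le]
    have hp1 : (0:ℝ) ≤ 1+μ := by linarith
    have hp2 : (0:ℝ) ≤ 1+Y := by linarith
    have hp3 : (0:ℝ) ≤ 12-8*μ := by linarith
    have hp4 : (0:ℝ) ≤ 8-4*μ := by linarith
    have hp5 : (0:ℝ) ≤ 3+2*μ := by linarith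
    have t0 : (0:ℝ) ≤ 64*(1-2*μ)^3*z.re^6 := (mul_nonneg (mul_nonneg (by norm_num : (0:ℝ) ≤ 64) (pow_nonneg hs.le 3)) (pow_nonneg hA 6))
    have t1 : (0:ℝ) ≤ 96*(1-2*μ)^2*X*ω*z.re^5 := (mul_nonneg (mul_nonneg (mul_nonneg (mul_nonneg (by norm_num : (0:ℝ) ≤ 96) (sq_nonneg (1-2*μ))) hX.le) hω.le) (pow_nonneg hA 5))
    have t2 : (0:ℝ) ≤ 96*(1-2*μ)^3*η*ω*z.re^5 := (mul_nonneg (mul_nonneg (mul_nonneg (mul_nonneg (by norm_num : (0:ℝ) ≤ 96) (pow_nonneg hs.le 3)) hη.le) hω.le) (pow_nonneg hA 5))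
    have t3 : (0:ℝ) ≤ 32*(1-2*μ)^2*ω^2*z.re^4 := (mul_nonneg (mul_nonneg (mul_nonneg (by norm_num : (0:ℝ) ≤ 32) (sq_nonneg (1-2*μ))) (pow_nonneg hω.le 2)) (pow_nonneg hA 4))
    have t4 : (0:ℝ) ≤ 32*(1-2*μ)^2*Y*ω^2*z.re^4 := (mul_nonneg (mul_nonneg (mul_nonneg (mul_nonneg (by norm_num : (0:ℝ) ≤ 32) (sq_nonneg (1-2*μ))) hY.le) (pow_nonneg hω.le 2)) (pow_nonneg hA 4))
    have t5 : (0:ℝ) ≤ 48*(1-2*μ)*X^2*ω^2*z.re^4 := (mul_nonneg (mul_nonneg (mul_nonneg (mul_nonneg (by norm_num : (0:ℝ) ≤ 48) hs.le) (pow_nonneg hX.le 2)) (pow_nonneg hω.le 2)) (pow_nonneg hA 4))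
    have t6 : (0:ℝ) ≤ 128*(1-2*μ)^2*η*X*ω^2*z.re^4 := (mul_nonneg (mul_nonneg (mul_nonneg (mul_nonneg (mul_nonneg (by norm_num : (0:ℝ) ≤ 128) (sq_nonneg (1-2*μ))) hη.le) hX.le) (pow_nonneg hω.le 2)) (pow_nonneg hA 4))
    have t7 : (0:ℝ) ≤ 48*(1-2*μ)^3*η^2*ω^2*z.re^4 := (mul_nonneg (mul_nonneg (mul_nonneg (mul_nonneg (by norm_num : (0:ℝ) ≤ 48) (pow_nonneg hs.le 3)) (pow_nonneg hη.le 2)) (pow_nonneg hω.le 2)) (pow_nonneg hA 4))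
    have t8 : (0:ℝ) ≤ 32*(1-2*μ)*X*ω^3*z.re^3 := (mul_nonneg (mul_nonneg (mul_nonneg (mul_nonneg (by norm_num : (0:ℝ) ≤ 32) hs.le) hX.le) (pow_nonneg hω.le 3)) (pow_nonneg hA 3))
    have t9 : (0:ℝ) ≤ 32*(1-2*μ)*X*Y*ω^3*z.re^3 := (mul_nonneg (mul_nonneg (mul_nonneg (mul_nonneg (mul_nonneg (by norm_num : (0:ℝ) ≤ 32) hs.le) hX.le) hY.le) (pow_nonneg hω.le 3)) (pow_nonneg hA 3))
    have t10 : (0:ℝ) ≤ 8*X^3*ω^3*z.re^3 := (mul_nonneg (mul_nonneg (mul_nonneg (by norm_num : (0:ℝ) ≤ 8) (pow_nonneg hX.le 3)) (pow_nonneg hω.le 3)) (pow_nonneg hA 3))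
    have t11 : (0:ℝ) ≤ 32*(1-2*μ)^2*η*ω^3*z.re^3 := (mul_nonneg (mul_nonneg (mul_nonneg (mul_nonneg (by norm_num : (0:ℝ) ≤ 32) (sq_nonneg (1-2*μ))) hη.le) (pow_nonneg hω.le 3)) (pow_nonneg hA 3))
    have t12 : (0:ℝ) ≤ 32*(1-2*μ)^2*η*Y*ω^3*z.re^3 := (mul_nonneg (mul_nonneg (mul_nonneg (mul_nonneg (mul_nonneg (by norm_num : (0:ℝ) ≤ 32) (sq_nonneg (1-2*μ))) hη.le) hY.le) (pow_nonneg hω.le 3)) (pow_nonneg hA 3))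
    have t13 : (0:ℝ) ≤ 56*(1-2*μ)*η*X^2*ω^3*z.re^3 := (mul_nonneg (mul_nonneg (mul_nonneg (mul_nonneg (mul_nonneg (by norm_num : (0:ℝ) ≤ 56) hs.le) hη.le) (pow_nonneg hX.le 2)) (pow_nonneg hω.le 3)) (pow_nonneg hA 3))
    have t14 : (0:ℝ) ≤ 56*(1-2*μ)^2*η^2*X*ω^3*z.re^3 := (mul_nonneg (mul_nonneg (mul_nonneg (mul_nonneg (mul_nonneg (by norm_num : (0:ℝ) ≤ 56) (sq_nonneg (1-2*μ))) (pow_nonneg hη.le 2)) hX.le) (pow_nonneg hω.le 3)) (pow_nonneg hA 3))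
    have t15 : (0:ℝ) ≤ 8*(1-2*μ)^3*η^3*ω^3*z.re^3 := (mul_nonneg (mul_nonneg (mul_nonneg (mul_nonneg (by norm_num : (0:ℝ) ≤ 8) (pow_nonneg hs.le 3)) (pow_nonneg hη.le 3)) (pow_nonneg hω.le 3)) (pow_nonneg hA 3))
    have t16 : (0:ℝ) ≤ 4*(1-2*μ)*((1-Y)^2+8*μ*Y)*ω^4*z.re^2 := (mul_nonneg (mul_nonneg (mul_nonneg (mul_nonneg (by norm_num : (0:ℝ) ≤ 4) hs.le) hq1) (pow_nonneg hω.le 4)) (pow_nonneg hA 2))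
    have t17 : (0:ℝ) ≤ (12-8*μ)*X^2*ω^4*z.re^2 := (mul_nonneg (mul_nonneg (mul_nonneg hp3 (pow_nonneg hX.le 2)) (pow_nonneg hω.le 4)) (pow_nonneg hA 2))
    have t18 : (0:ℝ) ≤ 8*X^2*Y*ω^4*z.re^2 := (mul_nonneg (mul_nonneg (mul_nonneg (mul_nonneg (by norm_num : (0:ℝ) ≤ 8) (pow_nonneg hX.le 2)) hY.le) (pow_nonneg hω.le 4)) (pow_nonneg hA 2))
    have t19 : (0:ℝ) ≤ 28*(1-2*μ)*η*X*ω^4*z.re^2 := (mul_nonneg (mul_nonneg (mul_nonneg (mul_nonneg (mul_nonneg (by norm_num : (0:ℝ) ≤ 28) hs.le) hη.le) hX.le) (pow_nonneg hω.le 4)) (pow_nonneg hA 2))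
    have t20 : (0:ℝ) ≤ 28*(1-2*μ)*η*X*Y*ω^4*z.re^2 := (mul_nonneg (mul_nonneg (mul_nonneg (mul_nonneg (mul_nonneg (mul_nonneg (by norm_num : (0:ℝ) ≤ 28) hs.le) hη.le) hX.le) hY.le) (pow_nonneg hω.le 4)) (pow_nonneg hA 2))
    have t21 : (0:ℝ) ≤ 8*η*X^3*ω^4*z.re^2 := (mul_nonneg (mul_nonneg (mul_nonneg (mul_nonneg (by norm_num : (0:ℝ) ≤ 8) hη.le) (pow_nonneg hX.le 3)) (pow_nonneg hω.le 4)) (pow_nonneg hA 2))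
    have t22 : (0:ℝ) ≤ 8*(1-2*μ)^2*(1+μ)*η^2*ω^4*z.re^2 := (mul_nonneg (mul_nonneg (mul_nonneg (mul_nonneg (mul_nonneg (by norm_num : (0:ℝ) ≤ 8) (sq_nonneg (1-2*μ))) hp1) (pow_nonneg hη.le 2)) (pow_nonneg hω.le 4)) (pow_nonneg hA 2))
    have t23 : (0:ℝ) ≤ 12*(1-2*μ)^2*η^2*Y*ω^4*z.re^2 := (mul_nonneg (mul_nonneg (mul_nonneg (mul_nonneg (mul_nonneg (by norm_num : (0:ℝ) ≤ 12) (sq_nonneg (1-2*μ))) (pow_nonneg hη.le 2)) hY.le) (pow_nonneg hω.le 4)) (pow_nonneg hA 2))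
    have t24 : (0:ℝ) ≤ 20*(1-2*μ)*η^2*X^2*ω^4*z.re^2 := (mul_nonneg (mul_nonneg (mul_nonneg (mul_nonneg (mul_nonneg (by norm_num : (0:ℝ) ≤ 20) hs.le) (pow_nonneg hη.le 2)) (pow_nonneg hX.le 2)) (pow_nonneg hω.le 4)) (pow_nonneg hA 2))
    have t25 : (0:ℝ) ≤ 8*(1-2*μ)^2*η^3*X*ω^4*z.re^2 := (mul_nonneg (mul_nonneg (mul_nonneg (mul_nonneg (mul_nonneg (by norm_num : (0:ℝ) ≤ 8) (sq_nonneg (1-2*μ))) (pow_nonneg hη.le 3)) hX.le) (pow_nonneg hω.le 4)) (pow_nonneg hA 2))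
    have t26 : (0:ℝ) ≤ 2*X^3*ω^5*z.re := (mul_nonneg (mul_nonneg (mul_nonneg (by norm_num : (0:ℝ) ≤ 2) (pow_nonneg hX.le 3)) (pow_nonneg hω.le 5)) hA)
    have t27 : (0:ℝ) ≤ 2*X*((1-Y)^2+8*μ*Y)*ω^5*z.re := (mul_nonneg (mul_nonneg (mul_nonneg (mul_nonneg (by norm_num : (0:ℝ) ≤ 2) hX.le) hq1) (pow_nonneg hω.le 5)) hA)
    have t28 : (0:ℝ) ≤ 2*(1-2*μ)*η*((1-Y)^2+8*μ*Y)*ω^5*z.re := (mul_nonneg (mul_nonneg (mul_nonneg (mul_nonneg (mul_nonneg (by norm_num : (0:ℝ) ≤ 2) hs.le) hη.le) hq1) (pow_nonneg hω.le 5)) hA)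
    have t29 : (0:ℝ) ≤ (8-4*μ)*η*X^2*ω^5*z.re := (mul_nonneg (mul_nonneg (mul_nonneg (mul_nonneg hp4 hη.le) (pow_nonneg hX.le 2)) (pow_nonneg hω.le 5)) hA)
    have t30 : (0:ℝ) ≤ 6*η*X^2*Y*ω^5*z.re := (mul_nonneg (mul_nonneg (mul_nonneg (mul_nonneg (mul_nonneg (by norm_num : (0:ℝ) ≤ 6) hη.le) (pow_nonneg hX.le 2)) hY.le) (pow_nonneg hω.le 5)) hA)
    have t31 : (0:ℝ) ≤ 2*(1-2*μ)*(3+2*μ)*η^2*X*ω^5*z.re := (mul_nonneg (mul_nonneg (mul_nonneg (mul_nonneg (mul_nonneg (mul_nonneg (by norm_num : (0:ℝ) ≤ 2) hs.le) hp5) (pow_nonneg hη.le 2)) hX.le) (pow_nonneg hω.le 5)) hA)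
    have t32 : (0:ℝ) ≤ 8*(1-2*μ)*η^2*X*Y*ω^5*z.re := (mul_nonneg (mul_nonneg (mul_nonneg (mul_nonneg (mul_nonneg (mul_nonneg (by norm_num : (0:ℝ) ≤ 8) hs.le) (pow_nonneg hη.le 2)) hX.le) hY.le) (pow_nonneg hω.le 5)) hA)
    have t33 : (0:ℝ) ≤ 2*η^2*X^3*ω^5*z.re := (mul_nonneg (mul_nonneg (mul_nonneg (mul_nonneg (by norm_num : (0:ℝ) ≤ 2) (pow_nonneg hη.le 2)) (pow_nonneg hX.le 3)) (pow_nonneg hω.le 5)) hA)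
    have t34 : (0:ℝ) ≤ 2*(1-2*μ)^2*η^3*Y*ω^5*z.re := (mul_nonneg (mul_nonneg (mul_nonneg (mul_nonneg (mul_nonneg (by norm_num : (0:ℝ) ≤ 2) (sq_nonneg (1-2*μ))) (pow_nonneg hη.le 3)) hY.le) (pow_nonneg hω.le 5)) hA)
    have t35 : (0:ℝ) ≤ 2*(1-2*μ)*η^3*X^2*ω^5*z.re := (mul_nonneg (mul_nonneg (mul_nonneg (mul_nonneg (mul_nonneg (by norm_num : (0:ℝ) ≤ 2) hs.le) (pow_nonneg hη.le 3)) (pow_nonneg hX.le 2)) (pow_nonneg hω.le 5)) hA)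
    have t36 : (0:ℝ) ≤ 4*μ*(1-2*μ)^2*η^3*ω^5*z.re := (mul_nonneg (mul_nonneg (mul_nonneg (mul_nonneg (mul_nonneg (by norm_num : (0:ℝ) ≤ 4) hμ0.le) (sq_nonneg (1-2*μ))) (pow_nonneg hη.le 3)) (pow_nonneg hω.le 5)) hA)
    have t37 : (0:ℝ) ≤ η*X*((1-Y-4*μ)^2+4*μ*(1-2*μ))*ω^6 := (mul_nonneg (mul_nonneg (mul_nonneg hη.le hX.le) hq2) (pow_nonneg hω.le 6))
    have t38 : (0:ℝ) ≤ (1-2*μ)*η^3*X*Y*ω^6 := (mul_nonneg (mul_nonneg (mul_nonneg (mul_nonneg hs.le (pow_nonneg hη.le 3)) hX.le) hY.le) (pow_nonneg hω.le 6))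
    have t39 : (0:ℝ) ≤ η^2*X^2*(1+Y)*ω^6 := (mul_nonneg (mul_nonneg (mul_nonneg (pow_nonneg hη.le 2) (pow_nonneg hX.le 2)) hp2) (pow_nonneg hω.le 6))
    have t40 : (0:ℝ) ≤ 2*μ*X^2*ω^6 := (mul_nonneg (mul_nonneg (mul_nonneg (by norm_num : (0:ℝ) ≤ 2) hμ0.le) (pow_nonneg hX.le 2)) (pow_nonneg hω.le 6))
    have t41 : (0:ℝ) ≤ 2*μ*(1-2*μ)^2*η^2*ω^6 := (mul_nonneg (mul_nonneg (mul_nonneg (mul_nonneg (by norm_num : (0:ℝ) ≤ 2) hμ0.le) (sq_nonneg (1-2*μ))) (pow_nonneg hη.le 2)) (pow_nonneg hω.le 6))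
    have t42 : (0:ℝ) ≤ 2*μ*(1-2*μ)*η^3*X*ω^6 := (mul_nonneg (mul_nonneg (mul_nonneg (mul_nonneg (mul_nonneg (by norm_num : (0:ℝ) ≤ 2) hμ0.le) hs.le) (pow_nonneg hη.le 3)) hX.le) (pow_nonneg hω.le 6))
    have tS : (0:ℝ) < η*X^3*ω^6 := by positivity
    have hsum : 64*(1-2*μ)^3*z.re^6 + 96*(1-2*μ)^2*X*ω*z.re^5 + 96*(1-2*μ)^3*η*ω*z.re^5 + 32*(1-2*μ)^2*ω^2*z.re^4 + 32*(1-2*μ)^2*Y*ω^2*z.re^4 + 48*(1-2*μ)*X^2*ω^2*z.re^4 + 128*(1-2*μ)^2*η*X*ω^2*z.re^4 + 48*(1-2*μ)^3*η^2*ω^2*z.re^4 + 32*(1-2*μ)*X*ω^3*z.re^3 + 32*(1-2*μ)*X*Y*ω^3*z.re^3 + 8*X^3*ω^3*z.re^3 + 32*(1-2*μ)^2*η*ω^3*z.re^3 + 32*(1-2*μ)^2*η*Y*ω^3*z.re^3 + 56*(1-2*μ)*η*X^2*ω^3*z.re^3 + 56*(1-2*μ)^2*η^2*X*ω^3*z.re^3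 + 8*(1-2*μ)^3*η^3*ω^3*z.re^3 + 4*(1-2*μ)*((1-Y)^2+8*μ*Y)*ω^4*z.re^2 + (12-8*μ)*X^2*ω^4*z.re^2 + 8*X^2*Y*ω^4*z.re^2 + 28*(1-2*μ)*η*X*ω^4*z.re^2 + 28*(1-2*μ)*η*X*Y*ω^4*z.re^2 + 8*η*X^3*ω^4*z.re^2 + 8*(1-2*μ)^2*(1+μ)*η^2*ω^4*z.re^2 + 12*(1-2*μ)^2*η^2*Y*ω^4*z.re^2 + 20*(1-2*μ)*η^2*X^2*ω^4*z.re^2 + 8*(1-2*μ)^2*η^3*X*ω^4*z.re^2 + 2*X^3*ω^5*z.re + 2*X*((1-Y)^2+8*μ*Y)*ω^5*z.re + 2*(1-2*μ)*η*((1-Y)^2+8*μ*Y)*ω^5*z.re + (8-4*μ)*η*X^2*ω^5*z.re + 6*η*X^2*Y*ω^5*z.re + 2*(1-2*μ)*(3+2*μ)*η^2*X*ω^5*z.re + 8*(1-2*μ)*η^2*X*Y*ω^5*z.re + 2*η^2*X^3*ω^5*z.re + 2*(1-2*μ)^2*η^3*Y*ω^5*z.re + 2*(1-2*μ)*η^3*X^2*ω^5*z.re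 + 4*μ*(1-2*μ)^2*η^3*ω^5*z.re + η*X*((1-Y-4*μ)^2+4*μ*(1-2*μ))*ω^6 + (1-2*μ)*η^3*X*Y*ω^6 + η^2*X^2*(1+Y)*ω^6 + 2*μ*X^2*ω^6 + 2*μ*(1-2*μ)^2*η^2*ω^6 + 2*μ*(1-2*μ)*η^3*X*ω^6 + η*X^3*ω^6 = 0 := by linear_combination -hP
    linarith [t0, t1, t2, t3, t4, t5, t6, t7, t8, t9, t10, t11, t12, t13, t14, t15, t16, t17, t18, t19, t20, t21, t22, t23, t24, t25, t26, t27, t28, t29, t30, t31, t32, t33, t34, t35, t36, t37, t38, t39, t40, t41, t42, tS, hsum]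
end

section
/- Let a₄, a₃, a₂ > 0 and ρ_m > 0, and suppose the monic-normalized quartic with these leading coefficients has four complex roots ξ₁ ± iκ₁, ξ₂ ± iκ₂ (two conjugate pairs) satisfying ξ₁² + κ₁² ≥ ρ_m², ξ₂² + κ₂² ≥ ρ_m², 2(ξ₁ + ξ₂) = -a₃/a₄, and ξ₁² + κ₁² + ξ₂² + κ₂² + 4ξ₁ξ₂ = a₂/a₄. Then each real part ξ_r (r = 1,2) satisfies ξ_r² + ½(a₃/a₄)ξ_r + ¼(a₂/a₄ - 2ρ_m²) ≥ 0. -/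
theorem stmt_16 (a₄ a₃ a₂ ρm ξ₁ κ₁ ξ₂ κ₂ : ℝ)
    (h4 : 0 < a₄) (h3 : 0 < a₃) (h2 : 0 < a₂) (hρ : 0 < ρm)
    (hm1 : ξ₁^2 + κ₁^2 ≥ ρm^2) (hm2 : ξ₂^2 + κ₂^2 ≥ ρm^2)
    (hsum : 2*(ξ₁ + ξ₂) = -(a₃/a₄))
    (hprod : ξ₁^2 + κ₁^2 + ξ₂^2 + κ₂^2 + 4*ξ₁*ξ₂ = a₂/a₄) :
    (ξ₁^2 + (1/2)*(a₃/a₄)*ξ₁ + (1/4)*(a₂/a₄ - 2*ρm^2) ≥ 0) ∧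
    (ξ₂^2 + (1/2)*(a₃/a₄)*ξ₂ + (1/4)*(a₂/a₄ - 2*ρm^2) ≥ 0) := by
  have ha3 : a₃/a₄ = -(2*(ξ₁ + ξ₂)) := by linarith
  rw [ha3, ← hprod]
  constructor <;> nlinarith [hm1, hm2]
end

section
/- Let m₀, m₁, m₂, β₀, β₁, β₂, ℓ₁, ℓ₂ > 0 and θ₁, θ₂ ∈ ℝ. The symmetric matrix D with rows (-β, -β₁ℓ₁cos θ₁, -β₂ℓ₂cos θ₂), (-β₁ℓ₁cos θ₁, -β₁ℓ₁², 0), (-β₂ℓ₂cos θ₂, 0, -β₂ℓ₂²), where β = β₀ + β₁ + β₂, is negative definite. -/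
/-!
For `v = (x, ω₁, ω₂)` (velocity of the support, angular velocities of the pendula), bob `i` moves
with planar velocity `(x + ℓᵢ cos θᵢ ωᵢ, ℓᵢ sin θᵢ ωᵢ)`, and since `sin² + cos² = 1` the form
`-v ⬝ D v` is the dissipation `β₀ x² + β₁ |bob₁ velocity|² + β₂ |bob₂ velocity|²`. All terms are
nonnegative; the first is positive if `x ≠ 0`, and if `x = 0` the bob speeds are `|ℓᵢ ωᵢ|`.
-/

open Real Matrix

noncomputable section

namespace CoupledPendula

def bobSpeedSq (x ℓ θ ω : ℝ) : ℝ :=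
  (x + ℓ * cos θ * ω) ^ 2 + (ℓ * sin θ * ω) ^ 2

lemma bobSpeedSq_nonneg (x ℓ θ ω : ℝ) : 0 ≤ bobSpeedSq x ℓ θ ω := by
  unfold bobSpeedSq
  positivity

lemma bobSpeedSq_zero_left (ℓ θ ω : ℝ) : bobSpeedSq 0 ℓ θ ω = ℓ ^ 2 * ω ^ 2 := by
  have h := sin_sq_add_cos_sq θ
  unfold bobSpeedSq
  linear_combination ℓ ^ 2 * ω ^ 2 * h

lemma bobSpeedSq_zero_left_pos {ℓ ω : ℝ} (θ : ℝ) (hℓ : ℓ ≠ 0) (hω : ω ≠ 0) :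
    0 < bobSpeedSq 0 ℓ θ ω := by
  rw [bobSpeedSq_zero_left]
  positivity

def dampingMatrix (β₀ β₁ β₂ ℓ₁ ℓ₂ θ₁ θ₂ : ℝ) : Matrix (Fin 3) (Fin 3) ℝ :=
  Matrix.of
    ![![-(β₀ + β₁ + β₂), -(β₁*ℓ₁*cos θ₁), -(β₂*ℓ₂*cos θ₂)],
      ![-(β₁*ℓ₁*cos θ₁), -(β₁*ℓ₁^2), 0],
      ![-(β₂*ℓ₂*cos θ₂), 0, -(β₂*ℓ₂^2)]]

variable (β₀ β₁ β₂ ℓ₁ ℓ₂ θ₁ θ₂ : ℝ)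

lemma dampingMatrix_isSymm : (dampingMatrix β₀ β₁ β₂ ℓ₁ ℓ₂ θ₁ θ₂).IsSymm := by
  ext i j
  fin_cases i <;> fin_cases j <;> rfl

lemma dotProduct_dampingMatrix_mulVec (v : Fin 3 → ℝ) :
    v ⬝ᵥ dampingMatrix β₀ β₁ β₂ ℓ₁ ℓ₂ θ₁ θ₂ *ᵥ v =
      -(β₀ * v 0 ^ 2 + β₁ * bobSpeedSq (v 0) ℓ₁ θ₁ (v 1)
        + β₂ * bobSpeedSq (v 0) ℓ₂ θ₂ (v 2)) := by
  have h₁ := sin_sq_add_cos_sq θ₁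
  have h₂ := sin_sq_add_cos_sq θ₂
  simp only [dampingMatrix, bobSpeedSq, dotProduct, mulVec, Fin.sum_univ_three, of_apply,
    cons_val_zero, cons_val_one, cons_val_two, head_cons, tail_cons]
  linear_combination β₁ * ℓ₁ ^ 2 * v 1 ^ 2 * h₁ + β₂ * ℓ₂ ^ 2 * v 2 ^ 2 * h₂

variable {β₀ β₁ β₂ ℓ₁ ℓ₂}

lemma dissipation_pos (hβ₀ : 0 < β₀) (hβ₁ : 0 < β₁) (hβ₂ : 0 < β₂) (hℓ₁ : ℓ₁ ≠ 0)
    (hℓ₂ : ℓ₂ ≠ 0) {v : Fin 3 → ℝ} (hv : v ≠ 0) :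
    0 < β₀ * v 0 ^ 2 + β₁ * bobSpeedSq (v 0) ℓ₁ θ₁ (v 1)
      + β₂ * bobSpeedSq (v 0) ℓ₂ θ₂ (v 2) := by
  have hS₁ := mul_nonneg hβ₁.le (bobSpeedSq_nonneg (v 0) ℓ₁ θ₁ (v 1))
  have hS₂ := mul_nonneg hβ₂.le (bobSpeedSq_nonneg (v 0) ℓ₂ θ₂ (v 2))
  by_cases hx : v 0 = 0
  · have hyz : v 1 ≠ 0 ∨ v 2 ≠ 0 := by
      by_contra! h
      exact hv (funext fun i => by fin_cases i <;> simp [hx, h.1, h.2])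
    rw [hx] at hS₁ hS₂ ⊢
    rcases hyz with hy | hz
    · linarith [mul_pos hβ₁ (bobSpeedSq_zero_left_pos θ₁ hℓ₁ hy)]
    · linarith [mul_pos hβ₂ (bobSpeedSq_zero_left_pos θ₂ hℓ₂ hz)]
  · have hx₂ : 0 < β₀ * v 0 ^ 2 := by positivity
    linarith

lemma dampingMatrix_negDef (hβ₀ : 0 < β₀) (hβ₁ : 0 < β₁) (hβ₂ : 0 < β₂) (hℓ₁ : ℓ₁ ≠ 0)
    (hℓ₂ : ℓ₂ ≠ 0) {v : Fin 3 → ℝ} (hv : v ≠ 0) :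
    v ⬝ᵥ dampingMatrix β₀ β₁ β₂ ℓ₁ ℓ₂ θ₁ θ₂ *ᵥ v < 0 := by
  rw [dotProduct_dampingMatrix_mulVec]
  exact neg_neg_of_pos (dissipation_pos θ₁ θ₂ hβ₀ hβ₁ hβ₂ hℓ₁ hℓ₂ hv)

end CoupledPendula

end

open CoupledPendula in
theorem stmt_18_general (β₀ β₁ β₂ ℓ₁ ℓ₂ θ₁ θ₂ : ℝ)
    (hb0 : 0 < β₀) (hb1 : 0 < β₁) (hb2 : 0 < β₂)
    (hl1 : 0 < ℓ₁) (hl2 : 0 < ℓ₂)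
    (D : Matrix (Fin 3) (Fin 3) ℝ)
    (hD : D = Matrix.of
      ![![-(β₀ + β₁ + β₂), -(β₁*ℓ₁*Real.cos θ₁), -(β₂*ℓ₂*Real.cos θ₂)],
        ![-(β₁*ℓ₁*Real.cos θ₁), -(β₁*ℓ₁^2), 0],
        ![-(β₂*ℓ₂*Real.cos θ₂), 0, -(β₂*ℓ₂^2)]]) :
    D.IsSymm ∧ ∀ v : Fin 3 → ℝ, v ≠ 0 → dotProduct v (D.mulVec v) < 0 := by
  subst hD
  exact ⟨dampingMatrix_isSymm β₀ β₁ β₂ ℓ₁ ℓ₂ θ₁ θ₂,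
    fun _ hv => dampingMatrix_negDef θ₁ θ₂ hb0 hb1 hb2 hl1.ne' hl2.ne' hv⟩

theorem stmt_18 (m₀ m₁ m₂ β₀ β₁ β₂ ℓ₁ ℓ₂ θ₁ θ₂ : ℝ)
    (hm0 : 0 < m₀) (hm1 : 0 < m₁) (hm2 : 0 < m₂)
    (hb0 : 0 < β₀) (hb1 : 0 < β₁) (hb2 : 0 < β₂)
    (hl1 : 0 < ℓ₁) (hl2 : 0 < ℓ₂)
    (D : Matrix (Fin 3) (Fin 3) ℝ)
    (hD : D = Matrix.of
      ![![-(β₀ + β₁ + β₂), -(β₁*ℓ₁*Real.cos θ₁), -(β₂*ℓ₂*Real.cos θ₂)],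
        ![-(β₁*ℓ₁*Real.cos θ₁), -(β₁*ℓ₁^2), 0],
        ![-(β₂*ℓ₂*Real.cos θ₂), 0, -(β₂*ℓ₂^2)]]) :
    D.IsSymm ∧ ∀ v : Fin 3 → ℝ, v ≠ 0 → dotProduct v (D.mulVec v) < 0 :=
  stmt_18_general β₀ β₁ β₂ ℓ₁ ℓ₂ θ₁ θ₂ hb0 hb1 hb2 hl1 hl2 D hD
end
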